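/- (Case 5) Let α, β ∈ ℂ with (α, β) ≠ (0, 0), and let η := (3,3,3,3,3,3,3,−7,−7,−7) ∈ ℂ^{10}. Then there exists μ ∈ ℂ with (∂F_{α,β}/∂x_i)(η) = μ for all i = 0,…,9 if and only if 117α + 175β = 0; that is, η is a singular point of the hyperquintic Q_{(α:β)} exactly for (α : β) = (175 : −117). -/

import Mathlib

/-!
`∂ᵢ S_{n+1}` is `S_n` of the variables other than `xᵢ`, and inverting
`S_{n+1} = S_{n+1}(x without xᵢ) + xᵢ S_n(x without xᵢ)` gives `∂ᵢ S_{n+1} = ∑ₖ (-xᵢ)ᵏ S_{n-k}`.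
Hence at a point `x` the partial derivatives of `F_{α,β}` are the values at the coordinates `xᵢ`
of one quartic polynomial `g` with coefficients in `S₁(x), …, S₄(x)`. As `η` takes exactly the
values `3` and `-7`, the partials agree iff `g 3 = g (-7)`, and `g 3 - g (-7) = 40 (117 α + 175 β)`.
-/

open MvPolynomial Finset

namespace Multiset

variable {R : Type*} [CommSemiring R]

theorem esymm_zero (s : Multiset R) : s.esymm 0 = 1 := by
  simp [esymm]

theorem zero_esymm_succ (n : ℕ) : (0 : Multiset R).esymm (n + 1) = 0 := by
  simp [esymm, powersetCard_zero_right]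

theorem esymm_cons_succ (a : R) (s : Multiset R) (n : ℕ) :
    (a ::ₘ s).esymm (n + 1) = s.esymm (n + 1) + a * s.esymm n := by
  simp [esymm, map_map, sum_map_mul_left]

end Multiset

theorem Multiset.esymm_eq_sum_neg_pow_mul_esymm_cons {R : Type*} [CommRing R] (a : R)
    (s : Multiset R) (n : ℕ) :
    s.esymm n = ∑ p ∈ HasAntidiagonal.antidiagonal n, (-a) ^ p.1 * (a ::ₘ s).esymm p.2 := by
  induction n with
  | zero => simp [esymm_zero]
  | succ n ih =>
    simp only [Nat.sum_antidiagonal_succ, pow_succ', mul_assoc, ← mul_sum, ← ih, esymm_cons_succ]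
    ring

theorem Finset.map_val_eq_cons_map_erase {α β : Type*} [DecidableEq α] {s : Finset α} {a : α}
    (h : a ∈ s) (f : α → β) : s.val.map f = f a ::ₘ (s.erase a).val.map f := by
  rw [erase_val, ← Multiset.map_cons, Multiset.cons_erase h]

theorem Set.exists_forall_apply_eq_iff_of_range_eq_pair {ι α β : Type*} {x : ι → α} {a b : α}
    (hx : range x = {a, b}) (g : α → β) : (∃ μ, ∀ i, g (x i) = μ) ↔ g a = g b := by
  have hmem (c : α) : c ∈ range x ↔ c = a ∨ c = b := by rw [hx]; rfl
  constructor
  · rintro ⟨μ, hμ⟩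
    obtain ⟨i, hi⟩ := (hmem a).2 (Or.inl rfl)
    obtain ⟨j, hj⟩ := (hmem b).2 (Or.inr rfl)
    rw [← hi, ← hj, hμ, hμ]
  · intro hab
    refine ⟨g a, fun i => ?_⟩
    rcases (hmem (x i)).1 (mem_range_self i) with hi | hi <;> rw [hi]
    exact hab.symm

namespace MvPolynomial

variable {σ R : Type*}

section CommSemiring

variable [CommSemiring R]

theorem pderiv_prod_X_of_notMem {i : σ} {t : Finset σ} (hi : i ∉ t) :
    pderiv i (∏ j ∈ t, X j : MvPolynomial σ R) = 0 :=
  t.prod_induction _ (fun p => pderiv i p = 0) (fun p q hp hq => by simp [hp, hq])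
    pderiv_one fun _ hj => pderiv_X_of_ne (ne_of_mem_of_not_mem hj hi)

variable [Fintype σ]

theorem eval_esymm_eq_multiset_esymm (x : σ → R) (n : ℕ) :
    eval x (esymm σ R n) = (univ.val.map x).esymm n := by
  simpa using aeval_esymm_eq_multiset_esymm σ R n x

theorem pderiv_esymm_succ [DecidableEq σ] (i : σ) (n : ℕ) :
    pderiv i (esymm σ R (n + 1)) = ((univ.erase i).val.map X).esymm n := by
  have hconst (m : ℕ) :
      pderiv i (((univ.erase i).val.map X).esymm m : MvPolynomial σ R) = 0 := by
    rw [esymm_map_val, map_sum]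
    exact sum_eq_zero fun t ht =>
      pderiv_prod_X_of_notMem fun hi => notMem_erase i univ ((mem_powersetCard.1 ht).1 hi)
  rw [esymm_eq_multiset_esymm, map_val_eq_cons_map_erase (mem_univ i), Multiset.esymm_cons_succ,
    map_add, pderiv_mul, hconst, hconst, pderiv_X_self]
  ring

end CommSemiring

variable [CommRing R] [Fintype σ]

theorem pderiv_esymm_succ_eq_sum (i : σ) (n : ℕ) :
    pderiv i (esymm σ R (n + 1)) = ∑ p ∈ antidiagonal n, (-X i) ^ p.1 * esymm σ R p.2 := by
  classical
  rw [pderiv_esymm_succ, Multiset.esymm_eq_sum_neg_pow_mul_esymm_cons (X i),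
    ← map_val_eq_cons_map_erase (mem_univ i), ← esymm_eq_multiset_esymm]

variable (σ) in
/-- The quintic `F_{α,β} = α S₅ + β S₂ S₃`. -/
noncomputable def quinticPencil (α β : R) : MvPolynomial σ R :=
  C α * esymm σ R 5 + C β * (esymm σ R 2 * esymm σ R 3)

theorem eval_pderiv_quinticPencil (α β : R) (x : σ → R) (i : σ) :
    eval x (pderiv i (quinticPencil σ α β)) =
      α * (x i ^ 4 - eval x (esymm σ R 1) * x i ^ 3 + eval x (esymm σ R 2) * x i ^ 2
          - eval x (esymm σ R 3) * x i + eval x (esymm σ R 4)) +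
        β * ((eval x (esymm σ R 1) - x i) * eval x (esymm σ R 3) + eval x (esymm σ R 2) *
          (x i ^ 2 - eval x (esymm σ R 1) * x i + eval x (esymm σ R 2))) := by
  rw [quinticPencil, map_add, pderiv_C_mul, pderiv_C_mul, pderiv_mul]
  simp only [pderiv_esymm_succ_eq_sum, Nat.sum_antidiagonal_succ, Nat.antidiagonal_zero,
    sum_singleton, map_add, map_mul, map_pow, map_neg, eval_X, eval_C, esymm_zero, map_one]
  ring

end MvPolynomial

theorem case5_singular_iff_general (α β : ℂ) (η : Fin 10 → ℂ)
    (hη : η = ![3, 3, 3, 3, 3, 3, 3, -7, -7, -7]) :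
    (∃ μ : ℂ, ∀ i, eval η (pderiv i
        (C α * esymm (Fin 10) ℂ 5 + C β * (esymm (Fin 10) ℂ 2 * esymm (Fin 10) ℂ 3))) = μ)
      ↔ 117 * α + 175 * β = 0 := by
  have hrange : Set.range η = {3, -7} := by
    simp [hη, Matrix.range_cons, Set.pair_comm]
  have hesymm (n : ℕ) : eval η (esymm (Fin 10) ℂ n) =
      (3 ::ₘ 3 ::ₘ 3 ::ₘ 3 ::ₘ 3 ::ₘ 3 ::ₘ 3 ::ₘ -7 ::ₘ -7 ::ₘ -7 ::ₘ 0).esymm n := by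
    rw [eval_esymm_eq_multiset_esymm, hη]
    rfl
  set g : ℂ → ℂ := fun t =>
    α * (t ^ 4 - 105 * t ^ 2 + 280 * t + 3570) + β * (-105 * t ^ 2 + 280 * t + 11025)
  have hpartial (i : Fin 10) :
      eval η (pderiv i (quinticPencil (Fin 10) α β)) = g (η i) := by
    simp only [eval_pderiv_quinticPencil, hesymm, Multiset.esymm_cons_succ, Multiset.esymm_zero,
      Multiset.zero_esymm_succ]
    ring
  have hgap : g 3 - g (-7) = 40 * (117 * α + 175 * β) := by
    ring
  change (∃ μ, ∀ i, eval η (pderiv i (quinticPencil (Fin 10) α β)) = μ) ↔ _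
  simp only [hpartial, Set.exists_forall_apply_eq_iff_of_range_eq_pair hrange]
  constructor <;> intro h
  · linear_combination (h - hgap) / 40
  · linear_combination 40 * h + hgap

/-- **Case 5.** For `(α, β) ≠ (0, 0)`, the point `η = (3,…,3,−7,−7,−7)` is a
singular point of the hyperquintic `Q_{(α:β)} = {α·S₅ + β·S₂·S₃ = 0}` in `ℙ⁸(ℂ)` if and only if
`117α + 175β = 0`, i.e. exactly for `(α : β) = (175 : −117)`. -/
theorem case5_singular_iff (α β : ℂ) (hαβ : (α, β) ≠ (0, 0)) (η : Fin 10 → ℂ)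
    (hη : η = ![3, 3, 3, 3, 3, 3, 3, -7, -7, -7]) :
    (∃ μ : ℂ, ∀ i, eval η (pderiv i
        (C α * esymm (Fin 10) ℂ 5 + C β * (esymm (Fin 10) ℂ 2 * esymm (Fin 10) ℂ 3))) = μ)
      ↔ 117 * α + 175 * β = 0 :=
  case5_singular_iff_general α β η hη
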